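/- arXiv:1501.06213 — 3 statements merged into one kernel-verified Lean document; each statement's English description precedes it below -/
import Mathlib

section
/- There exists a constant C_α > 0, depending only on α, such that for every n ∈ ℕ and every polynomial P ∈ P_n, ‖P'‖_{L²([0,∞),w)} ≤ C_α · n · ‖P‖_{L²([0,∞),w)}, where w(x) = x^α e^{−x} on [0,∞) and α > −1. -/
open MeasureTheory Polynomial

/-- The weighted L² norm of a polynomial `P` over a set `A ⊆ ℝ` with weight `w`:
`‖P‖_{L²(A,w)} = (∫_A |P(x)|² w(x) dx)^{1/2}`. -/
noncomputable def L2w (A : Set ℝ) (w : ℝ → ℝ) (P : Polynomial ℝ) : ℝ :=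
  Real.sqrt (∫ x in A, (P.eval x) ^ 2 * w x)

/-- The weighted Sobolev norm
`‖P‖_{W^{k,2}(A; w, λ₁w, …, λ_k w)} = (‖P‖²_{L²(A,w)} + ∑_{j=1}^k λ_j ‖P^{(j)}‖²_{L²(A,w)})^{1/2}`. -/
noncomputable def sobNorm (A : Set ℝ) (w : ℝ → ℝ) (k : ℕ) (lam : ℕ → ℝ)
    (P : Polynomial ℝ) : ℝ :=
  Real.sqrt ((L2w A w P) ^ 2 +
    ∑ j ∈ Finset.Icc 1 k, lam j * (L2w A w (derivative^[j] P)) ^ 2)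

/-!
The Laguerre operator `L P = (x - α - 1) P' - x P''` is symmetric for the weight
`w(x) = x^α e^{-x}` and has eigenvalues `0, 1, …, n` on polynomials of degree `≤ n`, since
`∏_{k ≤ n} (L - k)` annihilates them. Interpolating `n - t` and `n² - t²` at these nodes by sums
of squares of Lagrange basis polynomials gives `⟨LP, P⟩ ≤ n ‖P‖²` and `‖LP‖ ≤ n ‖P‖`.
Integrating `(x^{α+1} e^{-x} P'²)'` over `(0, ∞)` gives
`(α + 1) ‖P'‖² = ⟨LP, P⟩ - 2 ⟨P', LP⟩`, and the AM-GM inequality turns this into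
`‖P'‖ ≤ (α + 3)/(α + 1) · n ‖P‖`.
-/

open Set Filter Topology LinearMap

section SpectralBound

variable {V ι : Type*} [AddCommGroup V] [Module ℝ V] {B : LinearMap.BilinForm ℝ V}
  {T : Module.End ℝ V}

theorem LinearMap.IsAdjointPair.pow (hT : IsAdjointPair B B T T) (k : ℕ) :
    IsAdjointPair B B ⇑(T ^ k) ⇑(T ^ k) := by
  induction k with
  | zero => exact isAdjointPair_one
  | succ k ih => simpa only [← pow_succ, ← pow_succ'] using ih.mul hT

theorem LinearMap.IsAdjointPair.aeval (hT : IsAdjointPair B B T T) (p : ℝ[X]) :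
    IsAdjointPair B B (aeval T p) (aeval T p) := by
  induction p using Polynomial.induction_on' with
  | add p q hp hq => rw [map_add]; exact hp.add hq
  | monomial k c =>
    rw [← C_mul_X_pow_eq_monomial, ← smul_eq_C_mul, map_smul, aeval_X_pow]
    exact (hT.pow k).smul c

theorem apply_aeval_self_nonneg [DecidableEq ι] (hB : ∀ x, 0 ≤ B x x)
    (hT : IsAdjointPair B B T T) {s : Finset ι} {v : ι → ℝ} (hvs : Set.InjOn v s) {x : V}
    (hx : aeval T (Lagrange.nodal s v) x = 0) {g : ℝ[X]} (hg : ∀ i ∈ s, 0 ≤ g.eval (v i)) :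
    0 ≤ B (aeval T g x) x := by
  -- `q ≡ g` modulo the nodal polynomial, and `⟨q(T) x, x⟩ = ∑ g(v i) ‖ℓᵢ(T) x‖²`.
  set q : ℝ[X] := ∑ i ∈ s, g.eval (v i) • Lagrange.basis s v i ^ 2
  have hq : ∀ i ∈ s, q.eval (v i) = g.eval (v i) := by
    intro i hi
    rw [eval_finsetSum, Finset.sum_eq_single_of_mem i hi]
    · simp [Lagrange.eval_basis_self hvs hi]
    · intro j _ hji
      simp [Lagrange.eval_basis_of_ne hji hi]
  obtain ⟨r, hr⟩ : Lagrange.nodal s v ∣ g - q := by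
    rw [Lagrange.nodal_eq]
    refine Finset.prod_dvd_of_coprime (fun i hi j hj hij => ?_) (fun i hi => ?_)
    · exact isCoprime_X_sub_C_of_isUnit_sub (sub_ne_zero.mpr (hvs.ne hi hj hij)).isUnit
    · rw [dvd_iff_isRoot, IsRoot, eval_sub, hq i hi, sub_self]
  have hgq : aeval T g x = aeval T q x := by
    rw [← sub_eq_zero, ← LinearMap.sub_apply, ← map_sub, hr, mul_comm, map_mul,
      Module.End.mul_apply, hx, map_zero]
  rw [hgq, map_sum, LinearMap.sum_apply, map_sum, LinearMap.sum_apply]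
  refine Finset.sum_nonneg fun i hi => ?_
  rw [map_smul, LinearMap.smul_apply, map_smul, LinearMap.smul_apply, smul_eq_mul, map_pow, sq,
    Module.End.mul_apply, (hT.aeval _) _ x]
  exact mul_nonneg (hg i hi) (hB _)

end SpectralBound

section WeightedForm

variable (A : Set ℝ) (w : ℝ → ℝ) (hw : ∀ P : ℝ[X], IntegrableOn (fun x => P.eval x * w x) A)

noncomputable def weightedIntegral : ℝ[X] →ₗ[ℝ] ℝ where
  toFun P := ∫ x in A, P.eval x * w x
  map_add' P Q := by simp only [eval_add, add_mul]; exact integral_add (hw P) (hw Q)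
  map_smul' c P := by
    simp only [eval_smul, smul_eq_mul, mul_assoc, RingHom.id_apply]
    exact integral_const_mul c _

noncomputable def weightedForm : LinearMap.BilinForm ℝ ℝ[X] :=
  (LinearMap.mul ℝ ℝ[X]).compr₂ (weightedIntegral A w hw)

theorem weightedForm_apply (P Q : ℝ[X]) :
    weightedForm A w hw P Q = weightedIntegral A w hw (P * Q) := rfl

variable {A w}

theorem L2w_eq_sqrt_weightedForm (P : ℝ[X]) : L2w A w P = √(weightedForm A w hw P P) := by
  simp only [L2w, weightedForm_apply, weightedIntegral, LinearMap.coe_mk, AddHom.coe_mk,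
    eval_mul, sq]

variable {hw}

theorem weightedForm_self_nonneg (hA : MeasurableSet A) (hw0 : ∀ x ∈ A, 0 ≤ w x) (P : ℝ[X]) :
    0 ≤ weightedForm A w hw P P :=
  setIntegral_nonneg hA fun x hx => by
    simpa only [LinearMap.mul_apply', ← sq, eval_pow] using
      mul_nonneg (sq_nonneg (P.eval x)) (hw0 x hx)

end WeightedForm

section Laguerre

variable {α : ℝ}

theorem integrableOn_eval_mul_rpow_mul_exp_neg (hα : -1 < α) (P : ℝ[X]) :
    IntegrableOn (fun x => P.eval x * (x ^ α * Real.exp (-x))) (Ioi 0) := by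
  induction P using Polynomial.induction_on' with
  | add P Q hP hQ =>
    exact (hP.add hQ).congr_fun (fun x _ => by simp only [Pi.add_apply, eval_add, add_mul])
      measurableSet_Ioi
  | monomial k c =>
    have hk : 0 < (k : ℝ) + α + 1 := by linarith [k.cast_nonneg (α := ℝ)]
    refine IntegrableOn.congr_fun ((Real.GammaIntegral_convergent hk).const_mul c)
      (fun x (hx : 0 < x) => ?_) measurableSet_Ioi
    simp only [eval_monomial, add_sub_cancel_right, Real.rpow_add hx, Real.rpow_natCast]
    ring

theorem tendsto_rpow_mul_exp_neg_mul_eval_atTop (s : ℝ) (P : ℝ[X]) :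
    Tendsto (fun x => x ^ s * Real.exp (-x) * P.eval x) atTop (𝓝 0) := by
  induction P using Polynomial.induction_on' with
  | add P Q hP hQ => simpa only [eval_add, mul_add, add_zero] using hP.add hQ
  | monomial k c =>
    have h := (tendsto_rpow_mul_exp_neg_mul_atTop_nhds_zero (s + k) 1 one_pos).mul_const c
    rw [zero_mul] at h
    refine h.congr' ?_
    filter_upwards [eventually_gt_atTop 0] with x hx
    simp only [eval_monomial, Real.rpow_add hx, Real.rpow_natCast, neg_mul, one_mul]
    ring

theorem hasDerivAt_rpow_mul_exp_neg_mul_eval (R : ℝ[X]) {x : ℝ} (hx : 0 < x) :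
    HasDerivAt (fun y => y ^ (α + 1) * Real.exp (-y) * R.eval y)
      ((X * derivative R - (X - C (α + 1)) * R).eval x * (x ^ α * Real.exp (-x))) x := by
  have hpow : HasDerivAt (fun y => y ^ (α + 1)) ((α + 1) * x ^ α) x := by
    simpa using Real.hasDerivAt_rpow_const (p := α + 1) (Or.inl hx.ne')
  have hexp : HasDerivAt (fun y => Real.exp (-y)) (-Real.exp (-x)) x := by
    simpa using (hasDerivAt_neg x).exp
  refine ((hpow.mul hexp).mul (R.hasDerivAt x)).congr_deriv ?_
  simp only [Pi.mul_apply, eval_sub, eval_mul, eval_X, eval_C, Real.rpow_add_one hx.ne']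
  ring

theorem integrableOn_laguerreWeight (hα : -1 < α) (P : ℝ[X]) :
    IntegrableOn (fun x => P.eval x * (x ^ α * Real.exp (-x))) (Ici 0) :=
  (integrableOn_Ici_iff_integrableOn_Ioi).mpr (integrableOn_eval_mul_rpow_mul_exp_neg hα P)

noncomputable def laguerreIntegral (hα : -1 < α) : ℝ[X] →ₗ[ℝ] ℝ :=
  weightedIntegral (Ici 0) (fun x => x ^ α * Real.exp (-x)) (integrableOn_laguerreWeight hα)

noncomputable def laguerreForm (hα : -1 < α) : LinearMap.BilinForm ℝ ℝ[X] :=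
  weightedForm (Ici 0) (fun x => x ^ α * Real.exp (-x)) (integrableOn_laguerreWeight hα)

theorem laguerreForm_apply (hα : -1 < α) (P Q : ℝ[X]) :
    laguerreForm hα P Q = laguerreIntegral hα (P * Q) := rfl

theorem laguerreIntegral_X_mul_derivative (hα : -1 < α) (R : ℝ[X]) :
    laguerreIntegral hα (X * derivative R) = laguerreIntegral hα ((X - C (α + 1)) * R) := by
  -- integrate `(x ^ (α + 1) e^{-x} R(x))'` over `(0, ∞)`: both boundary terms vanish
  have hcont : ContinuousWithinAt (fun y => y ^ (α + 1) * Real.exp (-y) * R.eval y) (Ici 0) 0 :=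
    (((Real.continuousAt_rpow_const 0 (α + 1) (Or.inr (by linarith))).mul
      (Real.continuous_exp.comp continuous_neg).continuousAt).mul
        R.continuousAt).continuousWithinAt
  have h := integral_Ioi_of_hasDerivAt_of_tendsto hcont
    (fun x hx => hasDerivAt_rpow_mul_exp_neg_mul_eval R hx)
    (integrableOn_eval_mul_rpow_mul_exp_neg hα _) (tendsto_rpow_mul_exp_neg_mul_eval_atTop _ R)
  rw [Real.zero_rpow (by linarith), zero_mul, zero_mul, sub_zero] at h
  rw [← sub_eq_zero, ← map_sub]
  simpa only [laguerreIntegral, weightedIntegral, LinearMap.coe_mk, AddHom.coe_mk,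
    integral_Ici_eq_integral_Ioi] using h

noncomputable def laguerreOp (α : ℝ) : ℝ[X] →ₗ[ℝ] ℝ[X] :=
  LinearMap.mulLeft ℝ (X - C (α + 1)) ∘ₗ derivative -
    LinearMap.mulLeft ℝ X ∘ₗ derivative ∘ₗ derivative

theorem laguerreOp_apply (P : ℝ[X]) :
    laguerreOp α P = (X - C (α + 1)) * derivative P - X * derivative (derivative P) := rfl

theorem natDegree_laguerreOp_sub_smul_le {m : ℕ} {P : ℝ[X]} (hP : P.natDegree ≤ m + 1) :
    (laguerreOp α P - ((m + 1 : ℕ) : ℝ) • P).natDegree ≤ m := by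
  rw [natDegree_le_iff_coeff_eq_zero]
  intro N hN
  obtain ⟨j, rfl⟩ : ∃ j, N = j + 1 := ⟨N - 1, by omega⟩
  have h2 : P.coeff (j + 1 + 1) = 0 := coeff_eq_zero_of_natDegree_lt (by omega)
  simp only [laguerreOp_apply, coeff_sub, sub_mul, coeff_X_mul, coeff_C_mul, coeff_derivative,
    coeff_smul, smul_eq_mul, h2]
  rcases (show j = m ∨ m < j by omega) with rfl | hj
  · push_cast; ring
  · rw [coeff_eq_zero_of_natDegree_lt (show P.natDegree < j + 1 by omega)]; ring

theorem aeval_laguerreOp_nodal_apply_eq_zero {n : ℕ} {P : ℝ[X]} (hP : P.natDegree ≤ n) :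
    aeval (laguerreOp α) (Lagrange.nodal (Finset.range (n + 1)) (Nat.cast : ℕ → ℝ)) P = 0 := by
  induction n generalizing P with
  | zero =>
    obtain ⟨a, rfl⟩ := natDegree_eq_zero.mp (Nat.le_zero.mp hP)
    simp [Lagrange.nodal, laguerreOp_apply]
  | succ n ih =>
    rw [Lagrange.nodal_eq, Finset.prod_range_succ, ← Lagrange.nodal_eq, map_mul,
      Module.End.mul_apply, map_sub, aeval_X, aeval_C, LinearMap.sub_apply,
      Module.algebraMap_end_apply]
    exact ih (natDegree_laguerreOp_sub_smul_le hP)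

theorem laguerreForm_laguerreOp_left (hα : -1 < α) (P Q : ℝ[X]) :
    laguerreForm hα (laguerreOp α P) Q = laguerreForm hα (X * derivative P) (derivative Q) := by
  have h := laguerreIntegral_X_mul_derivative hα (derivative P * Q)
  rw [← sub_eq_zero, ← map_sub] at h
  rw [laguerreForm_apply, laguerreForm_apply, eq_comm, ← sub_eq_zero, ← map_sub]
  convert h using 2
  rw [laguerreOp_apply, derivative_mul]
  ring

theorem laguerreForm_comm (hα : -1 < α) (P Q : ℝ[X]) :
    laguerreForm hα P Q = laguerreForm hα Q P := by
  rw [laguerreForm_apply, laguerreForm_apply, mul_comm]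

theorem isAdjointPair_laguerreOp (hα : -1 < α) :
    IsAdjointPair (laguerreForm hα) (laguerreForm hα) (laguerreOp α) (laguerreOp α) := by
  intro P Q
  rw [laguerreForm_comm hα P, laguerreForm_laguerreOp_left, laguerreForm_laguerreOp_left,
    laguerreForm_apply, laguerreForm_apply, mul_right_comm]

theorem laguerreForm_self_nonneg (hα : -1 < α) (P : ℝ[X]) : 0 ≤ laguerreForm hα P P :=
  weightedForm_self_nonneg measurableSet_Ici
    (fun x (hx : 0 ≤ x) => mul_nonneg (Real.rpow_nonneg hx α) (Real.exp_nonneg _)) P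

theorem laguerreForm_aeval_laguerreOp_self_nonneg (hα : -1 < α) {n : ℕ} {P : ℝ[X]}
    (hP : P.natDegree ≤ n) {g : ℝ[X]} (hg : ∀ k ≤ n, 0 ≤ g.eval (k : ℝ)) :
    0 ≤ laguerreForm hα (aeval (laguerreOp α) g P) P :=
  apply_aeval_self_nonneg (laguerreForm_self_nonneg hα) (isAdjointPair_laguerreOp hα)
    Nat.cast_injective.injOn (aeval_laguerreOp_nodal_apply_eq_zero hP)
    fun k hk => hg k (Nat.lt_succ_iff.mp (Finset.mem_range.mp hk))

theorem laguerreForm_laguerreOp_self_le (hα : -1 < α) {n : ℕ} {P : ℝ[X]}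
    (hP : P.natDegree ≤ n) : laguerreForm hα (laguerreOp α P) P ≤ n * laguerreForm hα P P := by
  have h := laguerreForm_aeval_laguerreOp_self_nonneg hα hP (g := C (n : ℝ) - X)
    fun k hk => by simpa using (Nat.cast_le.mpr hk : (k : ℝ) ≤ n)
  simp only [map_sub, aeval_C, aeval_X, LinearMap.sub_apply, Module.algebraMap_end_apply,
    map_smul, LinearMap.smul_apply, smul_eq_mul] at h
  linarith

theorem laguerreForm_laguerreOp_laguerreOp_le (hα : -1 < α) {n : ℕ} {P : ℝ[X]}
    (hP : P.natDegree ≤ n) :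
    laguerreForm hα (laguerreOp α P) (laguerreOp α P) ≤ n ^ 2 * laguerreForm hα P P := by
  have h := laguerreForm_aeval_laguerreOp_self_nonneg hα hP (g := C ((n : ℝ) ^ 2) - X ^ 2)
    fun k hk => by
      simpa using pow_le_pow_left₀ k.cast_nonneg (Nat.cast_le.mpr hk : (k : ℝ) ≤ n) 2
  rw [map_sub, aeval_C, map_pow (aeval (laguerreOp α)) X 2, aeval_X, pow_two (laguerreOp α),
    LinearMap.sub_apply, Module.algebraMap_end_apply, Module.End.mul_apply, map_sub,
    LinearMap.sub_apply, map_smul, LinearMap.smul_apply, smul_eq_mul,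
    isAdjointPair_laguerreOp hα] at h
  linarith

theorem laguerreForm_derivative_self (hα : -1 < α) (P : ℝ[X]) :
    (α + 1) * laguerreForm hα (derivative P) (derivative P) =
      laguerreForm hα (laguerreOp α P) P -
        2 * laguerreForm hα (derivative P) (laguerreOp α P) := by
  have hP := laguerreForm_laguerreOp_left hα P P
  have hR := laguerreIntegral_X_mul_derivative hα (derivative P * derivative P)
  have e : C (α + 1) * (derivative P * derivative P) =
      laguerreOp α P * P - 2 * (derivative P * laguerreOp α P) -
        (laguerreOp α P * P - X * derivative P * derivative P) -
        (X * derivative (derivative P * derivative P) -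
          (X - C (α + 1)) * (derivative P * derivative P)) := by
    rw [laguerreOp_apply, derivative_mul]
    ring
  rw [← smul_eq_C_mul] at e
  have h := congrArg (laguerreIntegral hα) e
  simp only [map_smul, map_sub, map_add, two_mul, smul_eq_mul, laguerreForm_apply] at h hP hR ⊢
  linarith

theorem laguerreForm_derivative_self_le (hα : -1 < α) {n : ℕ} {P : ℝ[X]}
    (hP : P.natDegree ≤ n) :
    laguerreForm hα (derivative P) (derivative P) ≤
      ((α + 3) / (α + 1) * n) ^ 2 * laguerreForm hα P P := by
  have ha : 0 < α + 1 := by linarith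
  have hLP := laguerreForm_laguerreOp_self_le hα hP
  have hLL := laguerreForm_laguerreOp_laguerreOp_le hα hP
  have hP0 := laguerreForm_self_nonneg hα P
  have hn : (n : ℝ) ≤ n ^ 2 := by exact_mod_cast Nat.le_self_pow two_ne_zero n
  -- AM-GM: `0 ≤ ‖(α + 1) P' + 2 L P‖²`
  have hsq := laguerreForm_self_nonneg hα ((α + 1) • derivative P + (2 : ℝ) • laguerreOp α P)
  simp only [map_add, map_smul, LinearMap.add_apply, LinearMap.smul_apply, smul_eq_mul,
    laguerreForm_comm hα (laguerreOp α P) (derivative P)] at hsq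
  have hId := congrArg ((α + 1) * ·) (laguerreForm_derivative_self hα P)
  have hD : (α + 1) ^ 2 * laguerreForm hα (derivative P) (derivative P) ≤
      2 * (α + 1) * laguerreForm hα (laguerreOp α P) P +
        4 * laguerreForm hα (laguerreOp α P) (laguerreOp α P) := by
    linarith
  have hcoef : 2 * (α + 1) * n + 4 * n ^ 2 ≤ ((α + 3) * n) ^ 2 := by
    nlinarith [mul_le_mul_of_nonneg_left hn ha.le]
  rw [div_mul_eq_mul_div, div_pow, div_mul_eq_mul_div, le_div_iff₀ (by positivity)]
  nlinarith [mul_le_mul_of_nonneg_left hLP (by positivity : 0 ≤ 2 * (α + 1)),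
    mul_le_mul_of_nonneg_right hcoef hP0]

end Laguerre

/-- Markov inequality for the Laguerre weight `w(x) = x^α e^{-x}` on `[0,∞)`, `α > -1`. -/
theorem laguerre_markov (α : ℝ) (hα : -1 < α) :
    ∃ C : ℝ, 0 < C ∧ ∀ (n : ℕ) (P : Polynomial ℝ), P.natDegree ≤ n →
      L2w (Set.Ici 0) (fun x => x ^ α * Real.exp (-x)) (derivative P) ≤
        C * n * L2w (Set.Ici 0) (fun x => x ^ α * Real.exp (-x)) P := by
  have hC : 0 < (α + 3) / (α + 1) := div_pos (by linarith) (by linarith)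
  refine ⟨(α + 3) / (α + 1), hC, fun n P hP => ?_⟩
  rw [L2w_eq_sqrt_weightedForm (integrableOn_laguerreWeight hα),
    L2w_eq_sqrt_weightedForm (integrableOn_laguerreWeight hα)]
  calc √(laguerreForm hα (derivative P) (derivative P))
      ≤ √(((α + 3) / (α + 1) * n) ^ 2 * laguerreForm hα P P) :=
        Real.sqrt_le_sqrt (laguerreForm_derivative_self_le hα hP)
    _ = (α + 3) / (α + 1) * n * √(laguerreForm hα P P) := by
        rw [Real.sqrt_mul (sq_nonneg _), Real.sqrt_sq (by positivity)]
end

section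
/- Let w be a nonnegative measurable weight on a set A ⊆ ℝ, let n ∈ ℕ, and let C > 0 be a constant such that ‖P'‖_{L²(A,w)} ≤ C · ‖P‖_{L²(A,w)} for every polynomial P ∈ P_n. Then for every k ∈ ℕ, all λ₁, …, λ_k ≥ 0, and every P ∈ P_n, ‖P'‖_{W^{k,2}(A; w,λ₁w,…,λ_kw)} ≤ C · ‖P‖_{W^{k,2}(A; w,λ₁w,…,λ_kw)}. -/
/-! Differentiation commutes with `derivative^[j]` and preserves `P_n`, so the Markov inequality
applied to each `P^{(j)}` bounds the Sobolev norm of `P'` term by term by `C²` times that of `P`. -/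

open MeasureTheory Polynomial

lemma L2w_nonneg (A : Set ℝ) (w : ℝ → ℝ) (P : Polynomial ℝ) : 0 ≤ L2w A w P :=
  Real.sqrt_nonneg _

lemma sq_L2w_le_mul_sq {A : Set ℝ} {w : ℝ → ℝ} {P Q : Polynomial ℝ} {C : ℝ}
    (h : L2w A w Q ≤ C * L2w A w P) : L2w A w Q ^ 2 ≤ C ^ 2 * L2w A w P ^ 2 := by
  rw [← mul_pow]
  exact pow_le_pow_left₀ (L2w_nonneg A w Q) h 2

lemma sobNorm_le_mul_of_forall_le {A : Set ℝ} {w : ℝ → ℝ} {k : ℕ} {lam : ℕ → ℝ}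
    (hlam : ∀ j ∈ Finset.Icc 1 k, 0 ≤ lam j) {P Q : Polynomial ℝ} {C : ℝ} (hC : 0 ≤ C)
    (h : ∀ j ≤ k, L2w A w (derivative^[j] Q) ≤ C * L2w A w (derivative^[j] P)) :
    sobNorm A w k lam Q ≤ C * sobNorm A w k lam P := by
  rw [sobNorm, sobNorm, ← Real.sqrt_sq hC, ← Real.sqrt_mul (sq_nonneg C), mul_add,
    Finset.mul_sum]
  refine Real.sqrt_le_sqrt (add_le_add (sq_L2w_le_mul_sq (h 0 k.zero_le)) ?_)
  refine Finset.sum_le_sum fun j hj ↦ ?_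
  rw [mul_left_comm]
  exact mul_le_mul_of_nonneg_left
    (sq_L2w_le_mul_sq (h j (Finset.mem_Icc.mp hj).2)) (hlam j hj)

theorem markov_extends_to_sobolev_general (A : Set ℝ) (w : ℝ → ℝ) (n : ℕ) (C : ℝ) (hC : 0 < C)
    (h : ∀ P : Polynomial ℝ, P.natDegree ≤ n → L2w A w (derivative P) ≤ C * L2w A w P) :
    ∀ (k : ℕ) (lam : ℕ → ℝ), (∀ j ∈ Finset.Icc 1 k, 0 ≤ lam j) →
      ∀ P : Polynomial ℝ, P.natDegree ≤ n →
        sobNorm A w k lam (derivative P) ≤ C * sobNorm A w k lam P := by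
  intro k lam hlam P hP
  refine sobNorm_le_mul_of_forall_le hlam hC.le fun j _ ↦ ?_
  rw [← Function.iterate_succ_apply, Function.iterate_succ_apply']
  exact h _ ((natDegree_iterate_derivative P j).trans ((Nat.sub_le _ _).trans hP))

/-- If a Markov inequality `‖P'‖_{L²(A,w)} ≤ C ‖P‖_{L²(A,w)}` holds on `P_n`, then the same
inequality holds for the weighted Sobolev norm `W^{k,2}(A; w, λ₁w, …, λ_k w)`. -/
theorem markov_extends_to_sobolev (A : Set ℝ) (w : ℝ → ℝ) (hwmeas : Measurable w)
    (hw : ∀ x ∈ A, 0 ≤ w x) (n : ℕ) (C : ℝ) (hC : 0 < C)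
    (h : ∀ P : Polynomial ℝ, P.natDegree ≤ n → L2w A w (derivative P) ≤ C * L2w A w P) :
    ∀ (k : ℕ) (lam : ℕ → ℝ), (∀ j ∈ Finset.Icc 1 k, 0 ≤ lam j) →
      ∀ P : Polynomial ℝ, P.natDegree ≤ n →
        sobNorm A w k lam (derivative P) ≤ C * sobNorm A w k lam P :=
  markov_extends_to_sobolev_general A w n C hC h
end

section
/- Let a₁ < a₂ be real numbers and α, β > −1. Then there exists a constant C > 0, depending only on a₁, a₂, α, β (and not on n), such that for every n ∈ ℕ and every polynomial P ∈ P_n, ‖P'‖_{L²([a₁,a₂],w)} ≤ C · n² · ‖P‖_{L²([a₁,a₂],w)}, where w(x) = (a₂−x)^α (x−a₁)^β on [a₁,a₂]. -/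
open MeasureTheory Polynomial

/-!
Write `J_{α,β}(p) = ∫_a^b p w_{α,β}` with `w_{α,β}(x) = (b-x)^α (x-a)^β` and `φ = (b-x)(x-a)`,
so that `φ w_{α,β} = w_{α+1,β+1}`, and let `ψ` be the linear polynomial with
`(φ w_{α,β})' = ψ w_{α,β}`.

Integrating `(φ w_{α,β} u)' = (φ u' + ψ u) w_{α,β}` over `[a,b]` (the boundary terms vanish
because `α, β > -1`) shows that the Jacobi operator `𝓛 = φ D² + ψ D` satisfies
`J_{α,β}(𝓛P · Q) = -J_{α+1,β+1}(P' Q')`, so it is symmetric. It is also triangular on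
monomials, with diagonal entries `-λ_k`, `λ_k = k (k + α + β + 1)`. Splitting off an orthogonal
polynomial of top degree gives by induction the Rayleigh bound
`J_{α+1,β+1}(P'²) ≤ λ_n J_{α,β}(P²)` for `deg P ≤ n`.

Conversely, for the linear `g` solving `φ g' + ψ g = 1 - μ φ`, the same integration applied to
`u = g Q²` gives `J_{α,β}(Q²) = μ J_{α+1,β+1}(Q²) - 2 J_{α+1,β+1}(g Q Q')`. Bounding the last
term by Cauchy–Schwarz and the Rayleigh bound yields
`J_{α,β}(Q²) ≤ (A + B λ_n) J_{α+1,β+1}(Q²)`. Taking `Q = P'` and chaining the two bounds gives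
`J_{α,β}(P'²) = O(n⁴) J_{α,β}(P²)`.
-/

open Set

section DegreeLT

variable {R : Type*} [CommRing R]

theorem C_mul_X_pow_mem_degreeLT {i n : ℕ} (c : R) (h : i < n) :
    C c * X ^ i ∈ R[X]_n := by
  rw [C_mul_X_pow_eq_monomial]
  exact monomial_coe_mem_degreeLT ⟨i, h⟩ c

theorem mem_degreeLT_succ_of_natDegree_le {n : ℕ} {p : R[X]} (hp : p.natDegree ≤ n) :
    p ∈ R[X]_(n + 1) := by
  rw [degreeLT_succ_eq_degreeLE, mem_degreeLE]
  exact natDegree_le_iff_degree_le.1 hp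

theorem X_pow_mem_degreeLT_succ (k : ℕ) : (X ^ k : R[X]) ∈ R[X]_(k + 1) :=
  mem_degreeLT_succ_of_natDegree_le (natDegree_X_pow_le k)

theorem mem_degreeLT_succ_of_sub_X_pow_mem {k : ℕ} {q : R[X]} (hq : q - X ^ k ∈ R[X]_k) :
    q ∈ R[X]_(k + 1) := by
  simpa using add_mem (degreeLT_mono k.le_succ hq) (X_pow_mem_degreeLT_succ k)

theorem sub_C_coeff_mul_mem_degreeLT {k : ℕ} {p q : R[X]} (hq : q - X ^ k ∈ R[X]_k)
    (hp : p ∈ R[X]_(k + 1)) : p - C (p.coeff k) * q ∈ R[X]_k := by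
  have hlead : p - C (p.coeff k) * X ^ k ∈ R[X]_k := by
    rw [mem_degreeLT, degree_lt_iff_coeff_zero]
    intro m hm
    rcases hm.eq_or_lt with rfl | hm
    · simp
    · have := (degree_lt_iff_coeff_zero p (k + 1)).1 (mem_degreeLT.1 hp) m hm
      simp [coeff_X_pow, hm.ne', this]
  have hsplit : p - C (p.coeff k) * q =
      (p - C (p.coeff k) * X ^ k) - p.coeff k • (q - X ^ k) := by
    rw [smul_eq_C_mul]; ring
  rw [hsplit]
  exact sub_mem hlead (Submodule.smul_mem _ _ hq)

theorem LinearMap.map_C_mul {M : Type*} [AddCommGroup M] [Module R M] (Λ : R[X] →ₗ[R] M)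
    (c : R) (p : R[X]) : Λ (C c * p) = c • Λ p := by
  rw [← smul_eq_C_mul, map_smul]

variable {L : R[X] →ₗ[R] R[X]} {lam : ℕ → R}

theorem map_mem_degreeLT_of_triangular (hL : ∀ k, L (X ^ k) - C (lam k) * X ^ k ∈ R[X]_k)
    {k : ℕ} {p : R[X]} (hp : p ∈ R[X]_k) : L p ∈ R[X]_k := by
  classical
  rw [degreeLT_eq_span_X_pow] at hp
  induction hp using Submodule.span_induction with
  | mem x hx =>
    obtain ⟨j, hj, rfl⟩ := Finset.mem_image.1 hx
    have hjk : j + 1 ≤ k := Finset.mem_range.1 hj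
    have hsplit : L (X ^ j) = (L (X ^ j) - C (lam j) * X ^ j) + lam j • X ^ j := by
      rw [smul_eq_C_mul]; ring
    rw [hsplit]
    exact add_mem (degreeLT_mono (by omega) (hL j))
      (Submodule.smul_mem _ _ (degreeLT_mono hjk (X_pow_mem_degreeLT_succ j)))
  | zero => simp
  | add x y _ _ hx hy => simpa using add_mem hx hy
  | smul c x _ hx => simpa using Submodule.smul_mem _ c hx

theorem map_sub_C_mul_mem_degreeLT_of_triangular
    (hL : ∀ k, L (X ^ k) - C (lam k) * X ^ k ∈ R[X]_k) {k : ℕ} {q : R[X]}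
    (hq : q - X ^ k ∈ R[X]_k) : L q - C (lam k) * q ∈ R[X]_k := by
  have hsplit : L q - C (lam k) * q =
      (L (X ^ k) - C (lam k) * X ^ k) + (L (q - X ^ k) - lam k • (q - X ^ k)) := by
    rw [map_sub, smul_eq_C_mul]; ring
  rw [hsplit]
  exact add_mem (hL k)
    (sub_mem (map_mem_degreeLT_of_triangular hL hq) (Submodule.smul_mem _ _ hq))

end DegreeLT

section PositiveFunctional

variable {K : Type*} [Field K] [LinearOrder K] [IsStrictOrderedRing K] {Λ : K[X] →ₗ[K] K}

theorem sq_map_mul_le (hΛ : ∀ p, 0 ≤ Λ (p * p)) (p q : K[X]) :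
    Λ (p * q) ^ 2 ≤ Λ (p * p) * Λ (q * q) := by
  have hquad (t : K) : 0 ≤ Λ (p * p) * (t * t) + 2 * Λ (p * q) * t + Λ (q * q) := by
    have hexp : (C t * p + q) * (C t * p + q) =
        C (t * t) * (p * p) + C (2 * t) * (p * q) + q * q := by
      simp only [map_mul, map_ofNat]; ring
    have h := hΛ (C t * p + q)
    rw [hexp, map_add, map_add, Λ.map_C_mul, Λ.map_C_mul, smul_eq_mul, smul_eq_mul] at h
    linarith
  have h := discrim_le_zero hquad
  rw [discrim] at h
  linarith

theorem map_mul_eq_zero_of_map_mul_self_eq_zero (hΛ : ∀ p, 0 ≤ Λ (p * p)) {q : K[X]}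
    (hq : Λ (q * q) = 0) (p : K[X]) : Λ (p * q) = 0 := by
  have h := sq_map_mul_le hΛ p q
  rw [hq, mul_zero] at h
  exact pow_eq_zero_iff two_ne_zero |>.mp (le_antisymm h (sq_nonneg _))

theorem exists_mem_degreeLT_sub_orthogonal (hΛ : ∀ p, 0 ≤ Λ (p * p)) (k : ℕ) (p : K[X]) :
    ∃ r ∈ K[X]_k, ∀ s ∈ K[X]_k, Λ ((p - r) * s) = 0 := by
  induction k generalizing p with
  | zero => exact ⟨0, zero_mem _, fun s hs => by simp_all [mem_degreeLT]⟩
  | succ k ih =>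
    obtain ⟨r₀, hr₀, horth₀⟩ := ih (X ^ k)
    obtain ⟨r₁, hr₁, horth₁⟩ := ih p
    set q := X ^ k - r₀
    have hq : q - X ^ k ∈ K[X]_k := by simpa [q] using neg_mem hr₀
    set c := Λ ((p - r₁) * q) / Λ (q * q)
    have hpq : Λ ((p - r₁ - C c * q) * q) = 0 := by
      rw [sub_mul, map_sub, mul_assoc, Λ.map_C_mul, smul_eq_mul]
      by_cases h : Λ (q * q) = 0
      · rw [h, mul_zero, sub_zero, map_mul_eq_zero_of_map_mul_self_eq_zero hΛ h]
      · rw [div_mul_cancel₀ _ h, sub_self]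
    refine ⟨r₁ + C c * q, ?_, fun s hs => ?_⟩
    · rw [← smul_eq_C_mul]
      exact add_mem (degreeLT_mono k.le_succ hr₁)
        (Submodule.smul_mem _ _ (mem_degreeLT_succ_of_sub_X_pow_mem hq))
    · set t := s - C (s.coeff k) * q
      have ht : t ∈ K[X]_k := sub_C_coeff_mul_mem_degreeLT hq hs
      have hexp : (p - (r₁ + C c * q)) * s =
          C (s.coeff k) * ((p - r₁ - C c * q) * q) + (p - r₁) * t - C c * (q * t) := by
        simp only [t]; ring
      rw [hexp, map_sub, map_add, Λ.map_C_mul, Λ.map_C_mul, hpq, horth₁ t ht, horth₀ t ht]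
      simp

theorem exists_orthogonal_sub_X_pow_mem_degreeLT (hΛ : ∀ p, 0 ≤ Λ (p * p)) (k : ℕ) :
    ∃ q : K[X], q - X ^ k ∈ K[X]_k ∧ ∀ s ∈ K[X]_k, Λ (q * s) = 0 := by
  obtain ⟨r, hr, horth⟩ := exists_mem_degreeLT_sub_orthogonal hΛ k (X ^ k)
  exact ⟨X ^ k - r, by simpa using neg_mem hr, horth⟩

variable {L : K[X] →ₗ[K] K[X]} {lam : ℕ → K}

theorem map_mul_self_le_succ_of_triangular (hΛ : ∀ p, 0 ≤ Λ (p * p))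
    (hsymm : ∀ p q, Λ (L p * q) = Λ (p * L q))
    (hL : ∀ k, L (X ^ k) - C (lam k) * X ^ k ∈ K[X]_k) {k : ℕ}
    (hR : ∀ R ∈ K[X]_k, Λ (L R * R) ≤ lam k * Λ (R * R)) {p : K[X]}
    (hp : p ∈ K[X]_(k + 1)) : Λ (L p * p) ≤ lam k * Λ (p * p) := by
  obtain ⟨q, hq, horth⟩ := exists_orthogonal_sub_X_pow_mem_degreeLT hΛ k
  set c := p.coeff k
  set R := p - C c * q
  have hR_mem : R ∈ K[X]_k := sub_C_coeff_mul_mem_degreeLT hq hp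
  have hLR_mem : L R ∈ K[X]_k := map_mem_degreeLT_of_triangular hL hR_mem
  have hLq : Λ (L q * q) = lam k * Λ (q * q) := by
    have h := horth _ (map_sub_C_mul_mem_degreeLT_of_triangular hL hq)
    rw [mul_sub, map_sub, mul_left_comm, Λ.map_C_mul, smul_eq_mul, mul_comm q] at h
    linarith
  have hp' : p = C c * q + R := by ring
  have hLp : L p = C c * L q + L R := by
    rw [hp', map_add, ← smul_eq_C_mul, map_smul, smul_eq_C_mul]
  have hLpp : L p * p =
      C (c * c) * (L q * q) + C c * (L q * R) + C c * (q * L R) + L R * R := by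
    rw [hLp, hp']; simp only [map_mul]; ring
  have hpp : p * p = C (c * c) * (q * q) + C (2 * c) * (q * R) + R * R := by
    rw [hp']; simp only [map_mul, map_ofNat]; ring
  rw [hLpp, hpp]
  simp only [map_add, Λ.map_C_mul, smul_eq_mul]
  rw [hsymm q R, horth _ hLR_mem, horth _ hR_mem, hLq]
  linarith [hR R hR_mem]

theorem map_mul_self_le_of_triangular (hΛ : ∀ p, 0 ≤ Λ (p * p))
    (hsymm : ∀ p q, Λ (L p * q) = Λ (p * L q))
    (hL : ∀ k, L (X ^ k) - C (lam k) * X ^ k ∈ K[X]_k) (hlam : Monotone lam) (n : ℕ)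
    {p : K[X]} (hp : p ∈ K[X]_(n + 1)) : Λ (L p * p) ≤ lam n * Λ (p * p) := by
  induction n generalizing p with
  | zero =>
    refine map_mul_self_le_succ_of_triangular hΛ hsymm hL (fun R hR => ?_) hp
    simp_all [mem_degreeLT]
  | succ n ih =>
    refine map_mul_self_le_succ_of_triangular hΛ hsymm hL (fun R hR => ?_) hp
    exact (ih hR).trans (mul_le_mul_of_nonneg_right (hlam n.le_succ) (hΛ R))

end PositiveFunctional

theorem integrableOn_sub_rpow {a m γ : ℝ} (ham : a ≤ m) (hγ : -1 < γ) :
    IntegrableOn (fun x => (x - a) ^ γ) (Icc a m) := by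
  have h := (intervalIntegral.intervalIntegrable_rpow' (a := 0) (b := m - a) hγ).comp_sub_right a
  rw [zero_add, sub_add_cancel] at h
  exact (intervalIntegrable_iff_integrableOn_Icc_of_le ham).1 h

theorem integrableOn_rpow_sub {m b γ : ℝ} (hmb : m ≤ b) (hγ : -1 < γ) :
    IntegrableOn (fun x => (b - x) ^ γ) (Icc m b) := by
  have h := (intervalIntegral.intervalIntegrable_rpow' (a := 0) (b := b - m) hγ).comp_sub_left b
  rw [sub_zero, sub_sub_cancel] at h
  exact (intervalIntegrable_iff_integrableOn_Icc_of_le hmb).1 h.symm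

noncomputable def jacobiWeight (a b α β : ℝ) (x : ℝ) : ℝ := (b - x) ^ α * (x - a) ^ β

noncomputable def jacobiCoeff₂ (a b : ℝ) : ℝ[X] := (C b - X) * (X - C a)

noncomputable def jacobiCoeff₁ (a b α β : ℝ) : ℝ[X] :=
  C (β + 1) * (C b - X) - C (α + 1) * (X - C a)

noncomputable def jacobiOperator (a b α β : ℝ) : ℝ[X] →ₗ[ℝ] ℝ[X] :=
  LinearMap.mulLeft ℝ (jacobiCoeff₂ a b) ∘ₗ derivative ∘ₗ derivative +
    LinearMap.mulLeft ℝ (jacobiCoeff₁ a b α β) ∘ₗ derivative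

noncomputable def jacobiEigenvalue (α β : ℝ) (k : ℕ) : ℝ := k * (k + α + β + 1)

section JacobiWeight

variable {a b α β : ℝ}

theorem jacobiWeight_nonneg {x : ℝ} (hx : x ∈ Icc a b) : 0 ≤ jacobiWeight a b α β x :=
  mul_nonneg (Real.rpow_nonneg (sub_nonneg.2 hx.2) _) (Real.rpow_nonneg (sub_nonneg.2 hx.1) _)

theorem integrableOn_jacobiWeight (hab : a < b) (hα : -1 < α) (hβ : -1 < β) :
    IntegrableOn (jacobiWeight a b α β) (Icc a b) := by
  obtain ⟨m, ham, hmb⟩ := exists_between hab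
  have hleft : IntegrableOn (jacobiWeight a b α β) (Icc a m) := by
    refine IntegrableOn.continuousOn_mul ?_ (integrableOn_sub_rpow ham.le hβ) isCompact_Icc
    exact ContinuousOn.rpow_const (by fun_prop) fun x hx => Or.inl (by linarith [hx.2])
  have hright : IntegrableOn (jacobiWeight a b α β) (Icc m b) := by
    refine IntegrableOn.mul_continuousOn (integrableOn_rpow_sub hmb.le hα) ?_ isCompact_Icc
    exact ContinuousOn.rpow_const (by fun_prop) fun x hx => Or.inl (by linarith [hx.1])
  rw [← Icc_union_Icc_eq_Icc ham.le hmb.le]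
  exact hleft.union hright

theorem integrableOn_eval_mul_jacobiWeight (hab : a < b) (hα : -1 < α) (hβ : -1 < β)
    (p : ℝ[X]) : IntegrableOn (fun x => p.eval x * jacobiWeight a b α β x) (Icc a b) :=
  (integrableOn_jacobiWeight hab hα hβ).continuousOn_mul p.continuousOn isCompact_Icc

theorem eval_jacobiCoeff₂_mul_jacobiWeight {x : ℝ} (hx : x ∈ Icc a b) (hα : -1 < α)
    (hβ : -1 < β) :
    (jacobiCoeff₂ a b).eval x * jacobiWeight a b α β x =
      jacobiWeight a b (α + 1) (β + 1) x := by
  rw [jacobiWeight, jacobiWeight, Real.rpow_add_one' (sub_nonneg.2 hx.2) (by linarith),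
    Real.rpow_add_one' (sub_nonneg.2 hx.1) (by linarith)]
  simp only [jacobiCoeff₂, eval_mul, eval_sub, eval_C, eval_X]
  ring

theorem hasDerivAt_jacobiWeight_mul_eval {x : ℝ} (hx : x ∈ Ioo a b) (u : ℝ[X]) :
    HasDerivAt (fun y => jacobiWeight a b (α + 1) (β + 1) y * u.eval y)
      ((jacobiCoeff₂ a b * derivative u + jacobiCoeff₁ a b α β * u).eval x *
        jacobiWeight a b α β x) x := by
  have hbx : b - x ≠ 0 := by linarith [hx.2]
  have hxa : x - a ≠ 0 := by linarith [hx.1]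
  have h₁ := ((hasDerivAt_id x).const_sub b).rpow_const (p := α + 1) (Or.inl hbx)
  have h₂ := ((hasDerivAt_id x).sub_const a).rpow_const (p := β + 1) (Or.inl hxa)
  refine ((h₁.mul h₂).mul (u.hasDerivAt x)).congr_deriv ?_
  simp only [add_sub_cancel_right, jacobiWeight, jacobiCoeff₂, jacobiCoeff₁, eval_add, eval_mul,
    eval_sub, eval_C, eval_X, id_eq, Pi.mul_apply, Real.rpow_add_one hbx, Real.rpow_add_one hxa]
  ring

end JacobiWeight

section JacobiOperator

variable {a b α β : ℝ}

theorem jacobiOperator_apply (p : ℝ[X]) : jacobiOperator a b α β p =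
    jacobiCoeff₂ a b * derivative (derivative p) + jacobiCoeff₁ a b α β * derivative p := rfl

theorem jacobiOperator_X_pow_add_mem_degreeLT (k : ℕ) :
    jacobiOperator a b α β (X ^ k) + C (jacobiEigenvalue α β k) * X ^ k ∈ ℝ[X]_k := by
  match k with
  | 0 => simp [jacobiOperator_apply, jacobiEigenvalue]
  | 1 =>
    have h : jacobiOperator a b α β (X ^ 1) + C (jacobiEigenvalue α β 1) * X ^ 1 =
        C ((β + 1) * b + (α + 1) * a) * X ^ 0 := by
      simp only [jacobiOperator_apply, jacobiEigenvalue, jacobiCoeff₁, pow_one, derivative_X,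
        derivative_one, map_add, map_mul, map_one, Nat.cast_one]
      ring
    exact h ▸ C_mul_X_pow_mem_degreeLT _ one_pos
  | j + 2 =>
    have h₁ : derivative (X ^ (j + 2) : ℝ[X]) = C ((j : ℝ) + 2) * X ^ (j + 1) := by
      rw [derivative_X_pow]; norm_num
    have h₂ : derivative (C ((j : ℝ) + 2) * X ^ (j + 1)) =
        C (((j : ℝ) + 2) * (j + 1)) * X ^ j := by
      rw [derivative_C_mul, derivative_X_pow]; norm_num; ring
    have h : jacobiOperator a b α β (X ^ (j + 2)) +
        C (jacobiEigenvalue α β (j + 2)) * X ^ (j + 2) =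
          C ((j + 2) * ((j + 1) * (a + b) + (β + 1) * b + (α + 1) * a)) * X ^ (j + 1) -
            C ((j + 2) * (j + 1) * (a * b)) * X ^ j := by
      rw [jacobiOperator_apply, h₁, h₂]
      simp only [jacobiEigenvalue, jacobiCoeff₁, jacobiCoeff₂, map_add, map_mul, map_one,
        map_natCast, map_ofNat, Nat.cast_add, Nat.cast_ofNat]
      ring
    rw [h]
    exact sub_mem (C_mul_X_pow_mem_degreeLT _ (by omega)) (C_mul_X_pow_mem_degreeLT _ (by omega))

theorem jacobiEigenvalue_monotone (hαβ : -2 < α + β) : Monotone (jacobiEigenvalue α β) :=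
  monotone_nat_of_le_succ fun k => by simp only [jacobiEigenvalue]; push_cast; nlinarith

theorem jacobiEigenvalue_nonneg (hαβ : -2 < α + β) (n : ℕ) : 0 ≤ jacobiEigenvalue α β n :=
  (jacobiEigenvalue_monotone hαβ n.zero_le).trans_eq' (by simp [jacobiEigenvalue])

theorem jacobiEigenvalue_le_mul_sq (n : ℕ) :
    jacobiEigenvalue α β n ≤ (1 + |α + β + 1|) * (n : ℝ) ^ 2 := by
  have hn : (n : ℝ) ≤ (n : ℝ) ^ 2 := by exact_mod_cast Nat.le_self_pow two_ne_zero n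
  simp only [jacobiEigenvalue]
  nlinarith [le_abs_self (α + β + 1), abs_nonneg (α + β + 1), Nat.cast_nonneg (α := ℝ) n]

-- `g = c + d X` and `μ` are found by matching the coefficients of `1`, `X`, `X²`.
theorem exists_jacobiCoeff₂_mul_derivative_add_jacobiCoeff₁_mul_eq (hab : a ≠ b)
    (hα : -1 < α) (hβ : -1 < β) : ∃ (g : ℝ[X]) (μ : ℝ), 0 < μ ∧
      jacobiCoeff₂ a b * derivative g + jacobiCoeff₁ a b α β * g =
        1 - C μ * jacobiCoeff₂ a b := by
  set s := α + β + 2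
  set K := (α + 1) * (β + 1) * (b - a) ^ 2
  have hK : 0 < K := by
    have : 0 < (b - a) ^ 2 := by positivity [sub_ne_zero.2 hab.symm]
    have : 0 < α + 1 := by linarith
    have : 0 < β + 1 := by linarith
    positivity
  refine ⟨C (((a + b) * s - (β + 1) * b - (α + 1) * a) / K) - C (s / K) * X, s * (s + 1) / K,
    div_pos (mul_pos (by linarith) (by linarith)) hK, Polynomial.funext fun x => ?_⟩
  simp only [jacobiCoeff₂, jacobiCoeff₁, derivative_sub, derivative_C, derivative_C_mul,
    derivative_X, eval_add, eval_sub, eval_mul, eval_C, eval_X, eval_one, eval_zero]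
  field_simp
  simp only [s, K]
  ring

end JacobiOperator

theorem le_of_eq_sub_of_sq_le {x y z t μ : ℝ} (hx : 0 ≤ x) (hy : 0 ≤ y) (ht : 0 ≤ t)
    (heq : x = μ * y - 2 * z) (hz : z ^ 2 ≤ t * x * y) : x ≤ (2 * μ + 4 * t) * y := by
  have hamgm : -(x / 2 + 2 * t * y) ≤ 2 * z :=
    (abs_le_of_sq_le_sq' (by nlinarith [sq_nonneg (x / 2 - 2 * t * y)]) (by positivity)).1
  linarith

section JacobiFunctional

variable {a b α β : ℝ} (hab : a < b) (hα : -1 < α) (hβ : -1 < β)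

noncomputable def jacobiFunctional : ℝ[X] →ₗ[ℝ] ℝ where
  toFun p := ∫ x in Icc a b, p.eval x * jacobiWeight a b α β x
  map_add' p q := by
    simp only [eval_add, add_mul]
    exact integral_add (integrableOn_eval_mul_jacobiWeight hab hα hβ p)
      (integrableOn_eval_mul_jacobiWeight hab hα hβ q)
  map_smul' c p := by
    simp only [eval_smul, smul_eq_mul, mul_assoc, integral_const_mul, RingHom.id_apply]

theorem jacobiFunctional_apply (p : ℝ[X]) :
    jacobiFunctional hab hα hβ p = ∫ x in Icc a b, p.eval x * jacobiWeight a b α β x := rfl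

theorem jacobiFunctional_mul_self_nonneg (p : ℝ[X]) :
    0 ≤ jacobiFunctional hab hα hβ (p * p) :=
  setIntegral_nonneg measurableSet_Icc fun x hx =>
    mul_nonneg (by rw [eval_mul]; exact mul_self_nonneg _) (jacobiWeight_nonneg hx)

theorem jacobiFunctional_mono {p q : ℝ[X]} (h : ∀ x ∈ Icc a b, p.eval x ≤ q.eval x) :
    jacobiFunctional hab hα hβ p ≤ jacobiFunctional hab hα hβ q :=
  setIntegral_mono_on (integrableOn_eval_mul_jacobiWeight hab hα hβ p)
    (integrableOn_eval_mul_jacobiWeight hab hα hβ q) measurableSet_Icc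
    fun x hx => mul_le_mul_of_nonneg_right (h x hx) (jacobiWeight_nonneg hx)

theorem jacobiFunctional_jacobiCoeff₂_mul (r : ℝ[X]) :
    jacobiFunctional hab hα hβ (jacobiCoeff₂ a b * r) =
      jacobiFunctional hab (hα.trans (lt_add_one α)) (hβ.trans (lt_add_one β)) r := by
  refine setIntegral_congr_fun measurableSet_Icc fun x hx => ?_
  rw [eval_mul, mul_comm (eval x (jacobiCoeff₂ a b)), mul_assoc,
    eval_jacobiCoeff₂_mul_jacobiWeight hx hα hβ]

theorem jacobiFunctional_sturmLiouville_eq_zero (u : ℝ[X]) :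
    jacobiFunctional hab hα hβ
      (jacobiCoeff₂ a b * derivative u + jacobiCoeff₁ a b α β * u) = 0 := by
  have hF : ContinuousOn (fun y => jacobiWeight a b (α + 1) (β + 1) y * u.eval y) (Icc a b) := by
    refine ContinuousOn.mul (ContinuousOn.mul ?_ ?_) u.continuousOn
    · exact ContinuousOn.rpow_const (by fun_prop) fun _ _ => Or.inr (by linarith)
    · exact ContinuousOn.rpow_const (by fun_prop) fun _ _ => Or.inr (by linarith)
  have hint := (integrableOn_eval_mul_jacobiWeight hab hα hβ
    (jacobiCoeff₂ a b * derivative u + jacobiCoeff₁ a b α β * u)).mono_set Ioc_subset_Icc_self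
  have hFTC := intervalIntegral.integral_eq_sub_of_hasDerivAt_of_le hab.le hF
    (fun x hx => hasDerivAt_jacobiWeight_mul_eval hx u)
    ((intervalIntegrable_iff_integrableOn_Ioc_of_le hab.le).2 hint)
  rw [jacobiFunctional_apply, integral_Icc_eq_integral_Ioc,
    ← intervalIntegral.integral_of_le hab.le, hFTC]
  simp [jacobiWeight, Real.zero_rpow (show α + 1 ≠ 0 by linarith),
    Real.zero_rpow (show β + 1 ≠ 0 by linarith)]

theorem jacobiFunctional_jacobiOperator_mul (p q : ℝ[X]) :
    jacobiFunctional hab hα hβ (jacobiOperator a b α β p * q) =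
      -jacobiFunctional hab hα hβ (jacobiCoeff₂ a b * derivative p * derivative q) := by
  have h := jacobiFunctional_sturmLiouville_eq_zero hab hα hβ (derivative p * q)
  have hsplit : jacobiCoeff₂ a b * derivative (derivative p * q) +
      jacobiCoeff₁ a b α β * (derivative p * q) =
        jacobiOperator a b α β p * q + jacobiCoeff₂ a b * derivative p * derivative q := by
    rw [jacobiOperator_apply, derivative_mul]; ring
  rw [hsplit, map_add] at h
  linarith

theorem jacobiFunctional_jacobiOperator_mul_comm (p q : ℝ[X]) :
    jacobiFunctional hab hα hβ (jacobiOperator a b α β p * q) =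
      jacobiFunctional hab hα hβ (p * jacobiOperator a b α β q) := by
  rw [mul_comm p, jacobiFunctional_jacobiOperator_mul, jacobiFunctional_jacobiOperator_mul,
    mul_right_comm]

theorem jacobiFunctional_derivative_mul_self_le {n : ℕ} {P : ℝ[X]} (hP : P.natDegree ≤ n) :
    jacobiFunctional hab (hα.trans (lt_add_one α)) (hβ.trans (lt_add_one β))
        (derivative P * derivative P) ≤
      jacobiEigenvalue α β n * jacobiFunctional hab hα hβ (P * P) := by
  have h := map_mul_self_le_of_triangular (Λ := jacobiFunctional hab hα hβ)
    (L := -jacobiOperator a b α β) (jacobiFunctional_mul_self_nonneg hab hα hβ)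
    (fun p q => by
      rw [LinearMap.neg_apply, LinearMap.neg_apply, neg_mul, mul_neg, map_neg, map_neg,
        jacobiFunctional_jacobiOperator_mul_comm])
    (fun k => by
      rw [LinearMap.neg_apply, ← neg_add']
      exact neg_mem (jacobiOperator_X_pow_add_mem_degreeLT k))
    (jacobiEigenvalue_monotone (by linarith)) n (mem_degreeLT_succ_of_natDegree_le hP)
  rwa [LinearMap.neg_apply, neg_mul, map_neg, jacobiFunctional_jacobiOperator_mul, neg_neg,
    mul_assoc, jacobiFunctional_jacobiCoeff₂_mul] at h

theorem jacobiFunctional_mul_self_eq_of_sturmLiouville_eq {g : ℝ[X]} {μ : ℝ}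
    (hg : jacobiCoeff₂ a b * derivative g + jacobiCoeff₁ a b α β * g =
      1 - C μ * jacobiCoeff₂ a b) (Q : ℝ[X]) :
    jacobiFunctional hab hα hβ (Q * Q) =
      μ * jacobiFunctional hab (hα.trans (lt_add_one α)) (hβ.trans (lt_add_one β)) (Q * Q) -
        2 * jacobiFunctional hab (hα.trans (lt_add_one α)) (hβ.trans (lt_add_one β))
          (Q * (g * derivative Q)) := by
  have h := jacobiFunctional_sturmLiouville_eq_zero hab hα hβ (g * (Q * Q))
  have hsplit : jacobiCoeff₂ a b * derivative (g * (Q * Q)) +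
      jacobiCoeff₁ a b α β * (g * (Q * Q)) =
        Q * Q - C μ * (jacobiCoeff₂ a b * (Q * Q)) +
          C 2 * (jacobiCoeff₂ a b * (Q * (g * derivative Q))) := by
    rw [derivative_mul, derivative_mul, map_ofNat]
    linear_combination (Q * Q) * hg
  rw [hsplit, map_add, map_sub, LinearMap.map_C_mul, LinearMap.map_C_mul,
    jacobiFunctional_jacobiCoeff₂_mul, jacobiFunctional_jacobiCoeff₂_mul, smul_eq_mul,
    smul_eq_mul] at h
  linarith

theorem jacobiFunctional_mul_mul_self_le {g : ℝ[X]} {G : ℝ} (hG : ∀ x ∈ Icc a b, |g.eval x| ≤ G)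
    (p : ℝ[X]) :
    jacobiFunctional hab hα hβ ((g * p) * (g * p)) ≤
      G ^ 2 * jacobiFunctional hab hα hβ (p * p) := by
  rw [← smul_eq_mul (G ^ 2), ← LinearMap.map_C_mul]
  refine jacobiFunctional_mono _ _ _ fun x hx => ?_
  have hgx : (g.eval x) ^ 2 ≤ G ^ 2 := sq_le_sq' (abs_le.1 (hG x hx)).1 (abs_le.1 (hG x hx)).2
  simp only [eval_mul, eval_C]
  nlinarith [mul_le_mul_of_nonneg_right hgx (mul_self_nonneg (p.eval x))]

theorem exists_jacobiFunctional_mul_self_le_shift :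
    ∃ A B : ℝ, 0 < A ∧ 0 ≤ B ∧ ∀ (n : ℕ) (Q : ℝ[X]), Q.natDegree ≤ n →
      jacobiFunctional hab hα hβ (Q * Q) ≤ (A + B * jacobiEigenvalue α β n) *
        jacobiFunctional hab (hα.trans (lt_add_one α)) (hβ.trans (lt_add_one β)) (Q * Q) := by
  obtain ⟨g, μ, hμ, hg⟩ :=
    exists_jacobiCoeff₂_mul_derivative_add_jacobiCoeff₁_mul_eq hab.ne hα hβ
  obtain ⟨G, hG⟩ :=
    (isCompact_Icc (a := a) (b := b)).exists_bound_of_continuousOn g.continuousOn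
  refine ⟨2 * μ, 4 * G ^ 2, by positivity, by positivity, fun n Q hQ => ?_⟩
  set J₁ := jacobiFunctional hab (hα.trans (lt_add_one α)) (hβ.trans (lt_add_one β))
  have hJ₁ : ∀ p, 0 ≤ J₁ (p * p) := jacobiFunctional_mul_self_nonneg hab _ _
  have hlam := jacobiEigenvalue_nonneg (show -2 < α + β by linarith) n
  rw [mul_assoc 4]
  refine le_of_eq_sub_of_sq_le (t := G ^ 2 * jacobiEigenvalue α β n)
    (jacobiFunctional_mul_self_nonneg hab hα hβ Q) (hJ₁ Q) (by positivity)
    (jacobiFunctional_mul_self_eq_of_sturmLiouville_eq hab hα hβ hg Q) ?_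
  calc J₁ (Q * (g * derivative Q)) ^ 2
      ≤ J₁ (Q * Q) * J₁ ((g * derivative Q) * (g * derivative Q)) := sq_map_mul_le hJ₁ _ _
    _ ≤ J₁ (Q * Q) * (G ^ 2 * (jacobiEigenvalue α β n * jacobiFunctional hab hα hβ (Q * Q))) := by
        gcongr
        · exact hJ₁ Q
        · exact (jacobiFunctional_mul_mul_self_le hab _ _ hG _).trans
            (by gcongr; exact jacobiFunctional_derivative_mul_self_le hab hα hβ hQ)
    _ = G ^ 2 * jacobiEigenvalue α β n * jacobiFunctional hab hα hβ (Q * Q) * J₁ (Q * Q) := by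
        ring

theorem exists_jacobiFunctional_derivative_mul_self_le :
    ∃ D : ℝ, 0 < D ∧ ∀ (n : ℕ) (P : ℝ[X]), P.natDegree ≤ n →
      jacobiFunctional hab hα hβ (derivative P * derivative P) ≤
        D * ((n : ℝ) ^ 2) ^ 2 * jacobiFunctional hab hα hβ (P * P) := by
  obtain ⟨A, B, hA, hB, hshift⟩ := exists_jacobiFunctional_mul_self_le_shift hab hα hβ
  set σ := 1 + |α + β + 1|
  have hσ : 1 ≤ σ := le_add_of_nonneg_right (abs_nonneg _)
  refine ⟨(A + B * σ) * σ, by positivity, fun n P hP => ?_⟩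
  rcases n.eq_zero_or_pos with rfl | hn
  · simp [derivative_of_natDegree_zero (Nat.le_zero.1 hP)]
  have hn2 : (1 : ℝ) ≤ (n : ℝ) ^ 2 := one_le_pow₀ (by exact_mod_cast hn)
  have hlam := jacobiEigenvalue_le_mul_sq (α := α) (β := β) n
  have hlam0 := jacobiEigenvalue_nonneg (show -2 < α + β by linarith) n
  have hPP := jacobiFunctional_mul_self_nonneg hab hα hβ P
  calc jacobiFunctional hab hα hβ (derivative P * derivative P)
      ≤ (A + B * jacobiEigenvalue α β n) * jacobiFunctional hab (hα.trans (lt_add_one α))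
          (hβ.trans (lt_add_one β)) (derivative P * derivative P) :=
        hshift n _ ((natDegree_derivative_le P).trans (by omega))
    _ ≤ (A + B * jacobiEigenvalue α β n) *
          (jacobiEigenvalue α β n * jacobiFunctional hab hα hβ (P * P)) := by
        gcongr
        exact jacobiFunctional_derivative_mul_self_le hab hα hβ hP
    _ ≤ ((A + B * σ) * (n : ℝ) ^ 2) *
          (σ * (n : ℝ) ^ 2 * jacobiFunctional hab hα hβ (P * P)) := by
        gcongr
        all_goals nlinarith
    _ = (A + B * σ) * σ * ((n : ℝ) ^ 2) ^ 2 * jacobiFunctional hab hα hβ (P * P) := by ring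

theorem L2w_jacobiWeight (P : ℝ[X]) :
    L2w (Icc a b) (fun x => (b - x) ^ α * (x - a) ^ β) P =
      √(jacobiFunctional hab hα hβ (P * P)) := by
  simp only [L2w, jacobiFunctional_apply, jacobiWeight, eval_mul, sq]

end JacobiFunctional

/-- Markov inequality for the Jacobi weight transferred to an arbitrary compact interval:
`w(x) = (a₂-x)^α (x-a₁)^β` on `[a₁,a₂]`, `α, β > -1`. -/
theorem jacobi_markov_affine (a₁ a₂ : ℝ) (ha : a₁ < a₂) (α β : ℝ) (hα : -1 < α) (hβ : -1 < β) :
    ∃ C : ℝ, 0 < C ∧ ∀ (n : ℕ) (P : Polynomial ℝ), P.natDegree ≤ n →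
      L2w (Set.Icc a₁ a₂) (fun x => (a₂ - x) ^ α * (x - a₁) ^ β) (derivative P) ≤
        C * n ^ 2 * L2w (Set.Icc a₁ a₂) (fun x => (a₂ - x) ^ α * (x - a₁) ^ β) P := by
  obtain ⟨D, hD, hmarkov⟩ := exists_jacobiFunctional_derivative_mul_self_le ha hα hβ
  refine ⟨√D, Real.sqrt_pos.2 hD, fun n P hP => ?_⟩
  rw [L2w_jacobiWeight ha hα hβ, L2w_jacobiWeight ha hα hβ]
  calc √(jacobiFunctional ha hα hβ (derivative P * derivative P))
      ≤ √(D * ((n : ℝ) ^ 2) ^ 2 * jacobiFunctional ha hα hβ (P * P)) :=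
        Real.sqrt_le_sqrt (hmarkov n P hP)
    _ = √D * n ^ 2 * √(jacobiFunctional ha hα hβ (P * P)) := by
        rw [Real.sqrt_mul (by positivity), Real.sqrt_mul hD.le, Real.sqrt_sq (by positivity)]
end
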